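/- arXiv:0806.1347 — 3 statements merged into one kernel-verified Lean document; each statement's English description precedes it below -/
import Mathlib

section
/- Let W be a random variable with P(W>0)=1, E[W]=1 and E[W log₂ W] < 1, and define φ(s) = s − log₂ E[W^s]. Then φ is continuous on [0,1], strictly monotone increasing on [0,1], and maps [0,1] onto [0,1]. -/
/-! `L(s) = log₂ E[W^s]` is convex on `[0,1]` by Hölder's inequality and vanishes at `s = 1`.
By Gibbs' inequality `log y ≤ y - 1`, applied to `y = W^(s-1) / E[W^s]` and integrated against
`W dP`, the graph of `L` lies above the line through `(1, 0)` of slope `m = E[W log₂ W] < 1`.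
Convexity then bounds every secant slope of `L` on `[0,1]` by `m`, so `φ = id - L` is strictly
increasing. Continuity follows by dominated convergence from `W^s ≤ 1 + W`, and `φ 0 = 0`,
`φ 1 = 1`. -/

open MeasureTheory Filter Set Real

theorem Real.rpow_le_one_add {x s : ℝ} (hx : 0 ≤ x) (hs : s ∈ Icc (0 : ℝ) 1) : x ^ s ≤ 1 + x := by
  rcases le_total x 1 with h | h
  · linarith [rpow_le_one hx h hs.1]
  · linarith [rpow_le_self_of_one_le h hs.2]

theorem ConvexOn.sub_le_sub_mul_of_supportingLine_right {f : ℝ → ℝ} {a b m s t : ℝ}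
    (hf : ConvexOn ℝ (Icc a b) f) (hsupp : ∀ u ∈ Icc a b, f b + (u - b) * m ≤ f u)
    (hs : s ∈ Icc a b) (ht : t ∈ Icc a b) (hst : s < t) : f t - f s ≤ (t - s) * m := by
  rcases ht.2.eq_or_lt with rfl | htb
  · linarith [hsupp s hs]
  · have hslope := hf.slope_mono_adjacent hs (right_mem_Icc.2 (hs.1.trans hs.2)) hst htb
    have hright : (f b - f t) / (b - t) ≤ m := by
      rw [div_le_iff₀ (sub_pos.2 htb)]
      linarith [hsupp t ht]
    rw [div_le_iff₀ (sub_pos.2 hst)] at hslope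
    calc f t - f s ≤ (f b - f t) / (b - t) * (t - s) := hslope
      _ ≤ m * (t - s) := by gcongr
      _ = (t - s) * m := mul_comm _ _

namespace MeasureTheory

section General

variable {α : Type*} [MeasurableSpace α] {μ : Measure α}

theorem integral_pos_of_ae_pos [NeZero μ] {f : α → ℝ} (hf : ∀ᵐ x ∂μ, 0 < f x)
    (hfi : Integrable f μ) : 0 < ∫ x, f x ∂μ := by
  rw [integral_pos_iff_support_of_nonneg_ae (hf.mono fun _ hx => hx.le) hfi, pos_iff_ne_zero]
  intro h
  have hzero : ∀ᵐ x ∂μ, f x = 0 := measure_eq_zero_iff_ae_notMem.1 h |>.mono fun _ hx => by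
    simpa using hx
  have : ∀ᵐ x ∂μ, False := (hf.and hzero).mono fun _ hx => hx.1.ne' hx.2
  exact NeZero.ne μ (ae_eq_bot.1 (eventually_false_iff_eq_bot.1 this))

theorem integral_rpow_mul_rpow_le {f g : α → ℝ} (hf0 : 0 ≤ᵐ[μ] f) (hg0 : 0 ≤ᵐ[μ] g)
    (hf : Integrable f μ) (hg : Integrable g μ) {p q : ℝ} (hp : 0 ≤ p) (hq : 0 ≤ q)
    (hpq : p + q = 1) :
    ∫ a, f a ^ p * g a ^ q ∂μ ≤ (∫ a, f a ∂μ) ^ p * (∫ a, g a ∂μ) ^ q := by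
  have hfg0 : 0 ≤ᵐ[μ] fun a => f a ^ p * g a ^ q := by
    filter_upwards [hf0, hg0] with a hfa hga
    exact mul_nonneg (rpow_nonneg hfa p) (rpow_nonneg hga q)
  rw [integral_eq_lintegral_of_nonneg_ae hfg0
      ((hf.aemeasurable.pow_const p).mul (hg.aemeasurable.pow_const q)).aestronglyMeasurable,
    integral_eq_lintegral_of_nonneg_ae hf0 hf.1, integral_eq_lintegral_of_nonneg_ae hg0 hg.1,
    ENNReal.toReal_rpow, ENNReal.toReal_rpow, ← ENNReal.toReal_mul]
  refine ENNReal.toReal_mono (ENNReal.mul_ne_top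
    (ENNReal.rpow_ne_top_of_nonneg hp hf.lintegral_lt_top.ne)
    (ENNReal.rpow_ne_top_of_nonneg hq hg.lintegral_lt_top.ne)) ?_
  calc ∫⁻ a, ENNReal.ofReal (f a ^ p * g a ^ q) ∂μ
      = ∫⁻ a, ENNReal.ofReal (f a) ^ p * ENNReal.ofReal (g a) ^ q ∂μ := by
        refine lintegral_congr_ae ?_
        filter_upwards [hf0, hg0] with a hfa hga
        rw [ENNReal.ofReal_mul (rpow_nonneg hfa p), ENNReal.ofReal_rpow_of_nonneg hfa hp,
          ENNReal.ofReal_rpow_of_nonneg hga hq]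
    _ ≤ _ := ENNReal.lintegral_mul_norm_pow_le hf.aemeasurable.ennreal_ofReal
        hg.aemeasurable.ennreal_ofReal hp hq hpq

end General

section RpowMoments

variable {Ω : Type*} [MeasurableSpace Ω] {P : Measure Ω} {W : Ω → ℝ} {s : ℝ}

theorem ae_norm_rpow_le_one_add (hW : 0 ≤ᵐ[P] W) (hs : s ∈ Icc (0 : ℝ) 1) :
    ∀ᵐ ω ∂P, ‖W ω ^ s‖ ≤ 1 + W ω := by
  filter_upwards [hW] with ω hω
  rw [norm_of_nonneg (rpow_nonneg hω s)]
  exact rpow_le_one_add hω hs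

theorem integrable_rpow_of_mem_Icc [IsFiniteMeasure P] (hW : 0 ≤ᵐ[P] W)
    (hWint : Integrable W P) (hs : s ∈ Icc (0 : ℝ) 1) : Integrable (fun ω => W ω ^ s) P :=
  ((integrable_const 1).add hWint).mono' (hWint.aemeasurable.pow_const s).aestronglyMeasurable
    (ae_norm_rpow_le_one_add hW hs)

theorem continuousOn_integral_rpow [IsFiniteMeasure P] (hW : ∀ᵐ ω ∂P, 0 < W ω)
    (hWint : Integrable W P) : ContinuousOn (fun s : ℝ => ∫ ω, W ω ^ s ∂P) (Icc 0 1) :=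
  continuousOn_of_dominated (fun s _ => (hWint.aemeasurable.pow_const s).aestronglyMeasurable)
    (fun _ hs => ae_norm_rpow_le_one_add (hW.mono fun _ h => h.le) hs)
    ((integrable_const 1).add hWint)
    (hW.mono fun _ hω => (continuous_const_rpow hω.ne').continuousOn)

theorem integral_rpow_pos [NeZero P] (hW : ∀ᵐ ω ∂P, 0 < W ω)
    (hs : Integrable (fun ω => W ω ^ s) P) : 0 < ∫ ω, W ω ^ s ∂P :=
  integral_pos_of_ae_pos (hW.mono fun _ hω => rpow_pos_of_pos hω s) hs

theorem convexOn_logb_integral_rpow [NeZero P] {b : ℝ} (hb : 1 < b) (hW : ∀ᵐ ω ∂P, 0 < W ω)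
    {S : Set ℝ} (hS : Convex ℝ S) (hint : ∀ s ∈ S, Integrable (fun ω => W ω ^ s) P) :
    ConvexOn ℝ S (fun s => logb b (∫ ω, W ω ^ s ∂P)) := by
  refine ⟨hS, fun x hx y hy p q hp hq hpq => ?_⟩
  have hmix : ∫ ω, W ω ^ (p • x + q • y) ∂P = ∫ ω, (W ω ^ x) ^ p * (W ω ^ y) ^ q ∂P := by
    refine integral_congr_ae ?_
    filter_upwards [hW] with ω hω
    rw [← rpow_mul hω.le, ← rpow_mul hω.le, ← rpow_add hω, smul_eq_mul, smul_eq_mul,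
      mul_comm x, mul_comm y]
  have hpos : ∀ s ∈ S, 0 < ∫ ω, W ω ^ s ∂P := fun s hs => integral_rpow_pos hW (hint s hs)
  have hHolder := integral_rpow_mul_rpow_le (hW.mono fun _ hω => (rpow_pos_of_pos hω x).le)
    (hW.mono fun _ hω => (rpow_pos_of_pos hω y).le) (hint x hx) (hint y hy) hp hq hpq
  have hIx := hpos x hx
  have hIy := hpos y hy
  calc logb b (∫ ω, W ω ^ (p • x + q • y) ∂P)
      ≤ logb b ((∫ ω, W ω ^ x ∂P) ^ p * (∫ ω, W ω ^ y ∂P) ^ q) := by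
        refine logb_le_logb_of_le hb (hpos _ (hS hx hy hp hq hpq)) ?_
        rwa [hmix]
    _ = p • logb b (∫ ω, W ω ^ x ∂P) + q • logb b (∫ ω, W ω ^ y ∂P) := by
        rw [logb_mul (rpow_pos_of_pos hIx p).ne' (rpow_pos_of_pos hIy q).ne',
          logb_rpow_eq_mul_logb_of_pos hIx, logb_rpow_eq_mul_logb_of_pos hIy,
          smul_eq_mul, smul_eq_mul]

theorem sub_one_mul_integral_mul_logb_le_logb_integral_rpow {b : ℝ} (hb : 1 < b)
    (hW : ∀ᵐ ω ∂P, 0 < W ω) (hWint : Integrable W P) (hmean : ∫ ω, W ω ∂P = 1)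
    (hWlog : Integrable (fun ω => W ω * logb b (W ω)) P)
    (hs : Integrable (fun ω => W ω ^ s) P) (hpos : 0 < ∫ ω, W ω ^ s ∂P) :
    (s - 1) * ∫ ω, W ω * logb b (W ω) ∂P ≤ logb b (∫ ω, W ω ^ s ∂P) := by
  set I := ∫ ω, W ω ^ s ∂P
  have hpt : ∀ᵐ ω ∂P, (s - 1) * (W ω * logb b (W ω)) - logb b I * W ω
      ≤ (W ω ^ s / I - W ω) / log b := by
    filter_upwards [hW] with ω hω
    have hgibbs := log_le_sub_one_of_pos (div_pos (rpow_pos_of_pos hω (s - 1)) hpos)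
    rw [log_div (rpow_pos_of_pos hω _).ne' hpos.ne', log_rpow hω] at hgibbs
    have hpow : W ω ^ s = W ω * W ω ^ (s - 1) := by
      conv_lhs => rw [← add_sub_cancel (1 : ℝ) s, rpow_add hω, rpow_one]
    have hlogb : 0 < log b := log_pos hb
    calc (s - 1) * (W ω * logb b (W ω)) - logb b I * W ω
        = W ω * ((s - 1) * log (W ω) - log I) / log b := by
          simp only [logb]; ring
      _ ≤ W ω * (W ω ^ (s - 1) / I - 1) / log b := by gcongr
      _ = (W ω ^ s / I - W ω) / log b := by rw [hpow]; ring
  have hint : ∫ ω, (s - 1) * (W ω * logb b (W ω)) - logb b I * W ω ∂P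
      ≤ ∫ ω, (W ω ^ s / I - W ω) / log b ∂P :=
    integral_mono_ae ((hWlog.const_mul _).sub (hWint.const_mul _))
      (((hs.div_const I).sub hWint).div_const _) hpt
  rw [integral_sub (hWlog.const_mul _) (hWint.const_mul _), integral_const_mul,
    integral_const_mul, integral_div, integral_sub (hs.div_const I) hWint, integral_div,
    hmean, div_self hpos.ne', sub_self, zero_div] at hint
  linarith

end RpowMoments

end MeasureTheory

theorem phi_continuous_strictMono_onto_general
    {Ω : Type*} [MeasurableSpace Ω] (P : Measure Ω) [IsProbabilityMeasure P]
    (W : Ω → ℝ) (hWpos : ∀ᵐ ω ∂P, 0 < W ω)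
    (hWint : Integrable W P) (hWmean : ∫ ω, W ω ∂P = 1)
    (hlogint : Integrable (fun ω => W ω * Real.logb 2 (W ω)) P)
    (hlog : ∫ ω, W ω * Real.logb 2 (W ω) ∂P < 1) :
    ContinuousOn (fun s : ℝ => s - Real.logb 2 (∫ ω, W ω ^ s ∂P)) (Set.Icc 0 1) ∧
    StrictMonoOn (fun s : ℝ => s - Real.logb 2 (∫ ω, W ω ^ s ∂P)) (Set.Icc 0 1) ∧
    (fun s : ℝ => s - Real.logb 2 (∫ ω, W ω ^ s ∂P)) '' Set.Icc 0 1 = Set.Icc 0 1 := by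
  have hint : ∀ s ∈ Icc (0 : ℝ) 1, Integrable (fun ω => W ω ^ s) P :=
    fun s hs => integrable_rpow_of_mem_Icc (hWpos.mono fun _ h => h.le) hWint hs
  have hsupp : ∀ u ∈ Icc (0 : ℝ) 1, logb 2 (∫ ω, W ω ^ (1 : ℝ) ∂P)
      + (u - 1) * ∫ ω, W ω * logb 2 (W ω) ∂P ≤ logb 2 (∫ ω, W ω ^ u ∂P) := by
    intro u hu
    simp only [rpow_one, hWmean, logb_one, zero_add]
    exact sub_one_mul_integral_mul_logb_le_logb_integral_rpow one_lt_two hWpos hWint hWmean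
      hlogint (hint u hu) (integral_rpow_pos hWpos (hint u hu))
  have hconv := convexOn_logb_integral_rpow one_lt_two hWpos (convex_Icc 0 1) hint
  have hmono : StrictMonoOn (fun s : ℝ => s - logb 2 (∫ ω, W ω ^ s ∂P)) (Icc 0 1) :=
    fun s hs t ht hst => by
      linarith [hconv.sub_le_sub_mul_of_supportingLine_right hsupp hs ht hst,
        mul_lt_mul_of_pos_left hlog (sub_pos.2 hst)]
  have hcont : ContinuousOn (fun s : ℝ => s - logb 2 (∫ ω, W ω ^ s ∂P)) (Icc 0 1) :=
    continuousOn_id.sub (((continuousOn_integral_rpow hWpos hWint).log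
      fun s hs => (integral_rpow_pos hWpos (hint s hs)).ne').div_const _)
  refine ⟨hcont, hmono, ?_⟩
  rw [hcont.image_Icc_of_monotoneOn zero_le_one hmono.monotoneOn]
  simp [hWmean]

/-- **Lemma 3.2.** For a positive random variable `W` with `E[W] = 1` and
`E[W log₂ W] < 1`, the function `φ(s) = s - log₂ E[W^s]` is continuous on `[0,1]`, strictly
monotone increasing on `[0,1]`, and maps `[0,1]` onto `[0,1]`. -/
theorem phi_continuous_strictMono_onto
    {Ω : Type*} [MeasurableSpace Ω] (P : Measure Ω) [IsProbabilityMeasure P]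
    (W : Ω → ℝ) (hWm : Measurable W) (hWpos : ∀ᵐ ω ∂P, 0 < W ω)
    (hWint : Integrable W P) (hWmean : ∫ ω, W ω ∂P = 1)
    (hlogint : Integrable (fun ω => W ω * Real.logb 2 (W ω)) P)
    (hlog : ∫ ω, W ω * Real.logb 2 (W ω) ∂P < 1) :
    ContinuousOn (fun s : ℝ => s - Real.logb 2 (∫ ω, W ω ^ s ∂P)) (Set.Icc 0 1) ∧
    StrictMonoOn (fun s : ℝ => s - Real.logb 2 (∫ ω, W ω ^ s ∂P)) (Set.Icc 0 1) ∧
    (fun s : ℝ => s - Real.logb 2 (∫ ω, W ω ^ s ∂P)) '' Set.Icc 0 1 = Set.Icc 0 1 :=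
  phi_continuous_strictMono_onto_general P W hWpos hWint hWmean hlogint hlog
end

section
/- Assume P(W>0)=1, E[W]=1 and E[W log₂ W] < 1. Then for all x, y ∈ [0,1] and all s ∈ (0,1], E[ρ(x,y)^s] ≤ 8·|x−y|^{φ(s)}, where φ(s) = s − log₂ E[W^s]. -/
open MeasureTheory ProbabilityTheory Filter Set
open scoped ENNReal NNReal Topology

noncomputable section

/-- The index `k` of the dyadic interval `[k 2^{-j}, (k+1) 2^{-j}]` of level `j` containing `x`
(when `x` is a dyadic point of level `j`, we choose the interval whose maximum is `x`). -/
def dyadIdx (j : ℕ) (x : ℝ) : ℕ := ⌈x * 2 ^ j⌉₊ - 1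

/-- The dyadic interval `I_j(x)` of level `j` containing `x`. -/
def dyadInterval (j : ℕ) (x : ℝ) : Set ℝ :=
  Set.Icc ((dyadIdx j x : ℝ) / 2 ^ j) (((dyadIdx j x : ℝ) + 1) / 2 ^ j)

/-- The cascade density `w_n(x) = ∏_{j<n} W_{I_j(x)}`, where `Wf j k` is the random weight
attached to the `k`-th dyadic interval of level `j`. -/
def cascadeDensity {Ω : Type*} (Wf : ℕ → ℕ → Ω → ℝ) (n : ℕ) (ω : Ω) (x : ℝ) : ℝ :=
  ∏ j ∈ Finset.range n, Wf j (dyadIdx j x) ω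

/-- The random measure `μ_n`, having density `w_n` with respect to Lebesgue measure on `[0,1]`. -/
def cascadeMeasure {Ω : Type*} (Wf : ℕ → ℕ → Ω → ℝ) (n : ℕ) (ω : Ω) : Measure ℝ :=
  (volume.restrict (Set.Icc (0:ℝ) 1)).withDensity fun x =>
    ENNReal.ofReal (cascadeDensity Wf n ω x)

/-- Weak convergence of a sequence of (finite Borel) measures on `ℝ`:
convergence of integrals of all bounded continuous functions. -/
def IsWeakLimit (μs : ℕ → Measure ℝ) (μ : Measure ℝ) : Prop :=
  ∀ f : BoundedContinuousFunction ℝ ℝ,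
    Tendsto (fun n => ∫ x, f x ∂(μs n)) atTop (𝓝 (∫ x, f x ∂μ))

/-!
A dyadic interval `I` of level `m ≤ n` carries the `μ_n`-mass `X · R`, where `X` is the product
of the weights of the `m` dyadic intervals containing `I` and `R` is the mass of `I` under the
cascade built from the levels `m ≤ j < n` only. The two factors depend on disjoint sets of
weights, so `E[μ_n(I)^s] = E[W^s]^m · E[R^s]`, and Jensen's inequality for the concave map
`t ↦ t^s` gives `E[R^s] ≤ (E R)^s = 2^{-ms}`; hence `E[μ_n(I)^s] ≤ 2^{-m φ(s)}`.
An interval of length at most `3 · 2^{-m}` meets at most four dyadic intervals of level `m` and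
`t ↦ t^s` is subadditive, so its `s`-moment is at most `4 · 2^{-m φ(s)}`. Weak convergence and
Fatou's lemma transfer this to `μ`, and choosing `2^{-m}` comparable to `|x - y|` concludes.
-/

lemma measurable_dyadIdx (j : ℕ) : Measurable (dyadIdx j) :=
  (measurable_of_countable fun n : ℕ => n - 1).comp
    (Nat.measurable_ceil.comp (measurable_id.mul_const _))

lemma dyadIdx_mono (j : ℕ) : Monotone (dyadIdx j) := fun _ _ h =>
  Nat.sub_le_sub_right (Nat.ceil_mono (by gcongr)) 1

lemma dyadIdx_lt_two_pow (j : ℕ) {z : ℝ} (hz : z ≤ 1) : dyadIdx j z < 2 ^ j := by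
  have hceil : ⌈z * 2 ^ j⌉₊ ≤ 2 ^ j :=
    Nat.ceil_le.2 (by push_cast; nlinarith [pow_pos (two_pos : (0:ℝ) < 2) j])
  have : 0 < 2 ^ j := Nat.two_pow_pos j
  unfold dyadIdx
  omega

lemma self_mem_dyadInterval (j : ℕ) {z : ℝ} (hz : 0 ≤ z) : z ∈ dyadInterval j z := by
  have h2 : (0 : ℝ) < 2 ^ j := by positivity
  rw [dyadInterval, dyadIdx, mem_Icc, div_le_iff₀ h2, le_div_iff₀ h2]
  constructor
  · rcases Nat.eq_zero_or_pos ⌈z * 2 ^ j⌉₊ with h | h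
    · simp only [h, zero_tsub, CharP.cast_eq_zero]; positivity
    · rw [Nat.cast_pred h]
      linarith [Nat.ceil_lt_add_one (by positivity : 0 ≤ z * 2 ^ j)]
  · have : (⌈z * 2 ^ j⌉₊ : ℝ) ≤ (⌈z * 2 ^ j⌉₊ - 1 : ℕ) + 1 := by
      exact_mod_cast (by omega : ⌈z * 2 ^ j⌉₊ ≤ ⌈z * 2 ^ j⌉₊ - 1 + 1)
    linarith [Nat.le_ceil (z * 2 ^ j)]

lemma dyadIdx_le_dyadIdx_add {c d : ℝ} {m r : ℕ} (hcd : d - c ≤ r / 2 ^ m) :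
    dyadIdx m d ≤ dyadIdx m c + r := by
  have h2 : (0 : ℝ) < 2 ^ m := by positivity
  have hceil : ⌈d * 2 ^ m⌉₊ ≤ ⌈c * 2 ^ m⌉₊ + r := by
    refine Nat.ceil_le.2 ?_
    have h := (le_div_iff₀ h2).1 hcd
    push_cast
    linarith [Nat.le_ceil (c * 2 ^ m), sub_mul d c (2 ^ m)]
  unfold dyadIdx
  omega

lemma dyadIdx_eq_of_mem_Ioc {j k : ℕ} {z : ℝ}
    (hz : z ∈ Ioc ((k : ℝ) / 2 ^ j) ((k + 1) / 2 ^ j)) : dyadIdx j z = k := by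
  have h2 : (0 : ℝ) < 2 ^ j := by positivity
  rw [mem_Ioc, div_lt_iff₀ h2, le_div_iff₀ h2] at hz
  have hceil : ⌈z * 2 ^ j⌉₊ = k + 1 := by
    rw [Nat.ceil_eq_iff k.succ_ne_zero]
    push_cast
    constructor <;> linarith [hz.1, hz.2]
  simp [dyadIdx, hceil]

lemma dyadIdx_eq_div_of_mem_Ioc {j m k : ℕ} (hjm : j ≤ m) {z : ℝ}
    (hz : z ∈ Ioc ((k : ℝ) / 2 ^ m) ((k + 1) / 2 ^ m)) : dyadIdx j z = k / 2 ^ (m - j) := by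
  set q := 2 ^ (m - j)
  have hq : (0 : ℝ) < q := by positivity
  have h2j : (0 : ℝ) < 2 ^ j := by positivity
  have hsplit : (2 : ℝ) ^ m = 2 ^ j * q := by
    rw [← pow_mul_pow_sub 2 hjm]; push_cast [q]; rfl
  apply dyadIdx_eq_of_mem_Ioc
  refine Ioc_subset_Ioc ?_ ?_ hz <;>
    rw [hsplit, mul_comm, ← div_div, div_le_div_iff_of_pos_right h2j]
  · rw [le_div_iff₀ hq]
    exact_mod_cast Nat.div_mul_le_self k q
  · rw [div_le_iff₀ hq]
    have := Nat.lt_div_mul_add (a := k) (b := q) (Nat.two_pow_pos _)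
    exact_mod_cast (show k + 1 ≤ (k / q + 1) * q by rw [add_mul, one_mul]; omega)

lemma Icc_inter_subset_biUnion_dyadic {c d : ℝ} {m r : ℕ} (hcd : d - c ≤ r / 2 ^ m) :
    Icc c d ∩ Icc 0 1 ⊆ ⋃ k ∈ (Finset.Icc (dyadIdx m c) (dyadIdx m c + r)).filter (· < 2 ^ m),
      Icc ((k : ℝ) / 2 ^ m) ((k + 1) / 2 ^ m) := by
  rintro z ⟨⟨hcz, hzd⟩, hz0, hz1⟩
  refine mem_biUnion (x := dyadIdx m z) ?_ (self_mem_dyadInterval m hz0)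
  simp only [Finset.coe_filter, Finset.mem_Icc, mem_ofPred_eq]
  exact ⟨⟨dyadIdx_mono m hcz, (dyadIdx_mono m hzd).trans (dyadIdx_le_dyadIdx_add hcd)⟩,
    dyadIdx_lt_two_pow m hz1⟩

section General

variable {Ω : Type*} [MeasurableSpace Ω] {P : Measure Ω} {W : Ω → ℝ}

lemma lintegral_rpow_le_rpow_lintegral [IsProbabilityMeasure P] {f : Ω → ℝ≥0∞}
    (hf : AEMeasurable f P) {s : ℝ} (hs0 : 0 < s) (hs1 : s ≤ 1) :
    ∫⁻ ω, f ω ^ s ∂P ≤ (∫⁻ ω, f ω ∂P) ^ s := by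
  have h := eLpNorm'_le_eLpNorm'_of_exponent_le hs0 hs1 P hf.aestronglyMeasurable
  simp only [eLpNorm'_eq_lintegral_enorm, enorm_eq_self, ENNReal.rpow_one, div_one,
    one_div] at h
  exact (ENNReal.rpow_inv_le_iff hs0).1 h

lemma lintegral_ofReal_rpow_pos [NeZero P] (hWm : Measurable W) (hWpos : ∀ᵐ ω ∂P, 0 < W ω)
    (s : ℝ) : 0 < ∫⁻ ω, ENNReal.ofReal (W ω) ^ s ∂P := by
  refine pos_iff_ne_zero.2 fun h => ?_
  obtain ⟨ω, hpos, hzero⟩ := (hWpos.and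
    ((lintegral_eq_zero_iff (hWm.ennreal_ofReal.pow_const s)).1 h)).exists
  simp [ENNReal.rpow_eq_zero_iff, hpos.not_ge] at hzero

lemma lintegral_ofReal_rpow_le_one [IsProbabilityMeasure P] (hW0 : ∀ᵐ ω ∂P, 0 ≤ W ω)
    (hWint : Integrable W P) (hWmean : ∫ ω, W ω ∂P = 1) {s : ℝ} (hs0 : 0 < s) (hs1 : s ≤ 1) :
    ∫⁻ ω, ENNReal.ofReal (W ω) ^ s ∂P ≤ 1 :=
  (lintegral_rpow_le_rpow_lintegral hWint.aemeasurable.ennreal_ofReal hs0 hs1).trans_eq <| by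
    rw [← ofReal_integral_eq_lintegral_ofReal hWint hW0, hWmean, ENNReal.ofReal_one,
      ENNReal.one_rpow]

lemma ofReal_integral_rpow_eq_lintegral (hW0 : ∀ᵐ ω ∂P, 0 ≤ W ω) (hWm : AEMeasurable W P)
    {s : ℝ} (hs : 0 ≤ s) (hfin : ∫⁻ ω, ENNReal.ofReal (W ω) ^ s ∂P ≠ ⊤) :
    ENNReal.ofReal (∫ ω, W ω ^ s ∂P) = ∫⁻ ω, ENNReal.ofReal (W ω) ^ s ∂P := by
  rw [integral_eq_lintegral_of_nonneg_ae (hW0.mono fun _ h => Real.rpow_nonneg h s)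
    (hWm.pow_const s).aestronglyMeasurable, ← lintegral_congr_ae (hW0.mono fun _ h =>
      ENNReal.ofReal_rpow_of_nonneg h hs), ENNReal.ofReal_toReal hfin]

lemma ENNReal.rpow_sum_le_sum_rpow {ι : Type*} (t : Finset ι) (f : ι → ℝ≥0∞) {s : ℝ}
    (hs0 : 0 < s) (hs1 : s ≤ 1) : (∑ i ∈ t, f i) ^ s ≤ ∑ i ∈ t, f i ^ s := by
  classical
  induction t using Finset.induction_on with
  | empty => simp [hs0]
  | insert a t ha ih =>
    rw [Finset.sum_insert ha, Finset.sum_insert ha]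
    exact (ENNReal.rpow_add_le_add_rpow _ _ hs0.le hs1).trans (add_le_add_right ih _)

lemma ProbabilityTheory.iIndepFun.indepFun_of_dependsOn {ι β γ δ : Type*} [MeasurableSpace β]
    [MeasurableSpace γ] [MeasurableSpace δ] {Y : ι → Ω → β} (hY : iIndepFun Y P)
    (hYm : ∀ i, Measurable (Y i)) {S T : Finset ι} (hST : Disjoint S T)
    {F : (ι → β) → γ} {G : (ι → β) → δ} (hF : Measurable F) (hG : Measurable G)
    (hFS : DependsOn F S) (hGT : DependsOn G T) :
    IndepFun (fun ω => F (Y · ω)) (fun ω => G (Y · ω)) P := by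
  classical
  have := hY.isProbabilityMeasure
  obtain ⟨ω₀⟩ := nonempty_of_isProbabilityMeasure P
  -- `F` is a function of the `S`-tuple alone: fill the other coordinates with a fixed sample.
  have hfill (U : Finset ι) (y : ι → β) :
      ∀ i ∈ (U : Set ι), Function.updateFinset (Y · ω₀) U (U.restrict y) i = y i :=
    fun i hi => by simp [Function.updateFinset, Finset.mem_coe.1 hi]
  convert (hY.indepFun_finset S T hST hYm).comp (hF.comp (measurable_updateFinset (x := (Y · ω₀))))
    (hG.comp (measurable_updateFinset (x := (Y · ω₀)))) using 1 <;> funext ω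
  exacts [(hFS (hfill S _)).symm, (hGT (hfill T _)).symm]

end General

lemma IsWeakLimit.measure_le_liminf {μs : ℕ → Measure ℝ} {μ : Measure ℝ} [IsFiniteMeasure μ]
    (h : IsWeakLimit μs μ) {K U : Set ℝ} (hK : IsClosed K) (hU : IsOpen U) (hKU : K ⊆ U) :
    μ K ≤ liminf (fun n => μs n U) atTop := by
  obtain ⟨f, hfU, hfK, hf01⟩ := exists_continuous_zero_one_of_isClosed hU.isClosed_compl hK
    (disjoint_compl_left_iff_subset.2 hKU)
  let F : BoundedContinuousFunction ℝ ℝ := .ofNormedAddCommGroup f f.continuous 1 fun x => by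
    rw [Real.norm_eq_abs, abs_le]; constructor <;> linarith [(hf01 x).1, (hf01 x).2]
  have hF0 : ∀ ν : Measure ℝ, 0 ≤ᵐ[ν] F := fun _ => .of_forall fun x => (hf01 x).1
  have hFU (ν : Measure ℝ) : ENNReal.ofReal (∫ x, F x ∂ν) ≤ ν U := by
    rw [integral_eq_lintegral_of_nonneg_ae (hF0 ν) F.continuous.aestronglyMeasurable]
    refine ENNReal.ofReal_toReal_le.trans ?_
    rw [← lintegral_indicator_one hU.measurableSet]
    refine lintegral_mono fun x => ?_
    by_cases hx : x ∈ U
    · simpa [hx, F] using (hf01 x).2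
    · simp [hx, F, hfU (mem_compl hx)]
  have hKF : μ K ≤ ENNReal.ofReal (∫ x, F x ∂μ) := by
    rw [ofReal_integral_eq_lintegral_ofReal (F.integrable μ) (hF0 μ),
      ← lintegral_indicator_one hK.measurableSet]
    refine lintegral_mono fun x => ?_
    by_cases hx : x ∈ K
    · simp [hx, F, hfK hx]
    · simp [hx]
  calc μ K ≤ ENNReal.ofReal (∫ x, F x ∂μ) := hKF
    _ = liminf (fun n => ENNReal.ofReal (∫ x, F x ∂μs n)) atTop :=
      ((ENNReal.continuous_ofReal.tendsto _).comp (h F)).liminf_eq.symm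
    _ ≤ liminf (fun n => μs n U) atTop := liminf_le_liminf (.of_forall fun n => hFU (μs n))

lemma add_one_div_two_pow_le_one {m k : ℕ} (hk : k < 2 ^ m) : ((k : ℝ) + 1) / 2 ^ m ≤ 1 := by
  rw [div_le_one (by positivity)]
  exact_mod_cast hk

lemma measurable_eval_dyadIdx (j : ℕ) :
    Measurable fun q : (ℕ × ℕ → ℝ) × ℝ => q.1 (j, dyadIdx j q.2) :=
  (measurable_from_prod_countable_left (f := fun q : (ℕ × ℕ → ℝ) × ℕ => q.1 (j, q.2))
    fun k => measurable_pi_apply (j, k)).comp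
    (measurable_fst.prodMk ((measurable_dyadIdx j).comp measurable_snd))

section CascadeMeasure

variable {Ω : Type*} {Wf : ℕ → ℕ → Ω → ℝ}

lemma measurable_cascadeMeasure_apply [MeasurableSpace Ω] (hWfm : ∀ j k, Measurable (Wf j k))
    (n : ℕ) {E : Set ℝ} (hE : MeasurableSet E) : Measurable fun ω => cascadeMeasure Wf n ω E := by
  have hconf : Measurable fun ω (p : ℕ × ℕ) => Wf p.1 p.2 ω :=
    measurable_pi_lambda _ fun p => hWfm p.1 p.2
  have hdens : Measurable fun q : Ω × ℝ => ENNReal.ofReal (cascadeDensity Wf n q.1 q.2) :=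
    ENNReal.measurable_ofReal.comp <| Finset.measurable_prod _ fun j _ =>
      (measurable_eval_dyadIdx j).comp ((hconf.comp measurable_fst).prodMk measurable_snd)
  simp_rw [cascadeMeasure, withDensity_apply _ hE]
  exact hdens.lintegral_prod_right'

lemma cascadeMeasure_compl_Icc (n : ℕ) (ω : Ω) : cascadeMeasure Wf n ω (Icc 0 1)ᶜ = 0 :=
  withDensity_absolutelyContinuous _ _ <| by
    rw [Measure.restrict_apply measurableSet_Icc.compl, compl_inter_self, measure_empty]

lemma cascadeMeasure_Icc_eq_setLIntegral_Ioc (n : ℕ) (ω : Ω) {a b : ℝ} (ha : 0 ≤ a)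
    (hb : b ≤ 1) :
    cascadeMeasure Wf n ω (Icc a b) =
      ∫⁻ z in Ioc a b, ENNReal.ofReal (cascadeDensity Wf n ω z) := by
  rw [cascadeMeasure, withDensity_apply _ measurableSet_Icc, Measure.restrict_restrict
    measurableSet_Icc, inter_eq_left.2 (Icc_subset_Icc ha hb)]
  exact setLIntegral_congr Ioc_ae_eq_Icc.symm

end CascadeMeasure

/-- For a configuration `y` of weights (`y (j, i)` is the weight of the `i`-th dyadic interval of
level `j`), the product of the weights of the `m` intervals strictly containing the `k`-th
interval of level `m`. -/
def ancestorWeight (m k : ℕ) (y : ℕ × ℕ → ℝ) : ℝ≥0∞ :=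
  ∏ j ∈ Finset.range m, ENNReal.ofReal (y (j, k / 2 ^ (m - j)))

/-- The mass that the cascade truncated to levels `m ≤ j < n` gives to the `k`-th interval of
level `m`. -/
def subcascadeMass (m n k : ℕ) (y : ℕ × ℕ → ℝ) : ℝ≥0∞ :=
  ∫⁻ z in Ioc ((k : ℝ) / 2 ^ m) ((k + 1) / 2 ^ m),
    ∏ j ∈ Finset.Ico m n, ENNReal.ofReal (y (j, dyadIdx j z))

def ancestorIndices (m k : ℕ) : Finset (ℕ × ℕ) :=
  (Finset.range m).image fun j => (j, k / 2 ^ (m - j))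

def subcascadeIndices (m n : ℕ) : Finset (ℕ × ℕ) :=
  Finset.Ico m n ×ˢ Finset.range (2 ^ n)

lemma measurable_ancestorWeight (m k : ℕ) : Measurable (ancestorWeight m k) :=
  Finset.measurable_prod _ fun _ _ => ENNReal.measurable_ofReal.comp (measurable_pi_apply _)

lemma measurable_subcascadeMass (m n k : ℕ) : Measurable (subcascadeMass m n k) :=
  Measurable.lintegral_prod_right' <| Finset.measurable_prod _ fun j _ =>
    ENNReal.measurable_ofReal.comp (measurable_eval_dyadIdx j)

lemma dependsOn_ancestorWeight (m k : ℕ) :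
    DependsOn (ancestorWeight m k) (ancestorIndices m k : Set (ℕ × ℕ)) :=
  fun y y' h => Finset.prod_congr rfl fun j hj => by
    rw [h _ (Finset.mem_coe.2 (Finset.mem_image_of_mem _ hj))]

lemma dependsOn_subcascadeMass {m k : ℕ} (n : ℕ) (hk : k < 2 ^ m) :
    DependsOn (subcascadeMass m n k) (subcascadeIndices m n : Set (ℕ × ℕ)) := by
  refine fun y y' h => setLIntegral_congr_fun measurableSet_Ioc fun z hz =>
    Finset.prod_congr rfl fun j hj => ?_
  have hz1 : z ≤ 1 := hz.2.trans (add_one_div_two_pow_le_one hk)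
  have hjn : 2 ^ j ≤ 2 ^ n := Nat.pow_le_pow_right two_pos (Finset.mem_Ico.1 hj).2.le
  rw [h _ (Finset.mem_coe.2 (Finset.mem_product.2
    ⟨hj, Finset.mem_range.2 ((dyadIdx_lt_two_pow j hz1).trans_le hjn)⟩))]

lemma disjoint_ancestorIndices_subcascadeIndices (m n k : ℕ) :
    Disjoint (ancestorIndices m k) (subcascadeIndices m n) := by
  simp only [ancestorIndices, subcascadeIndices, Finset.disjoint_left, Finset.mem_image,
    Finset.mem_range, Finset.mem_product, Finset.mem_Ico]
  rintro _ ⟨j, hj, rfl⟩ ⟨hmj, -⟩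
  omega

lemma cascadeMeasure_dyadic_eq_mul {Ω : Type*} {Wf : ℕ → ℕ → Ω → ℝ} {ω : Ω}
    (hW : ∀ j k, 0 ≤ Wf j k ω) {m n k : ℕ} (hmn : m ≤ n) (hk : k < 2 ^ m) :
    cascadeMeasure Wf n ω (Icc ((k : ℝ) / 2 ^ m) ((k + 1) / 2 ^ m)) =
      ancestorWeight m k (fun p => Wf p.1 p.2 ω) *
        subcascadeMass m n k (fun p => Wf p.1 p.2 ω) := by
  rw [cascadeMeasure_Icc_eq_setLIntegral_Ioc n ω (by positivity) (add_one_div_two_pow_le_one hk),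
    subcascadeMass, ← lintegral_const_mul' _ _ (show ancestorWeight m k _ ≠ ⊤ from
      ENNReal.prod_ne_top fun _ _ => ENNReal.ofReal_ne_top)]
  refine setLIntegral_congr_fun measurableSet_Ioc fun z hz => ?_
  rw [cascadeDensity, ENNReal.ofReal_prod_of_nonneg fun j _ => hW _ _,
    ← Finset.prod_range_mul_prod_Ico _ hmn, ancestorWeight]
  congr 1
  exact Finset.prod_congr rfl fun j hj => by
    rw [dyadIdx_eq_div_of_mem_Ioc (Finset.mem_range.1 hj).le hz]

section Moments

variable {Ω : Type*} [MeasurableSpace Ω] {P : Measure Ω} {W : Ω → ℝ} {Wf : ℕ → ℕ → Ω → ℝ}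

lemma ae_nonneg_weights (hWm : Measurable W) (hWfm : ∀ j k, Measurable (Wf j k))
    (hid : ∀ j k, Measure.map (Wf j k) P = Measure.map W P) (hW0 : ∀ᵐ ω ∂P, 0 ≤ W ω) :
    ∀ᵐ ω ∂P, ∀ j k, 0 ≤ Wf j k ω := by
  simp only [ae_all_iff]
  intro j k
  have h := (ae_map_iff hWm.aemeasurable measurableSet_Ici).2 hW0
  rw [← hid j k] at h
  exact ae_of_ae_map (hWfm j k).aemeasurable h

lemma lintegral_prod_weights (hWm : Measurable W) (hWfm : ∀ j k, Measurable (Wf j k))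
    (hid : ∀ j k, Measure.map (Wf j k) P = Measure.map W P)
    (hiid : iIndepFun (fun p : ℕ × ℕ => Wf p.1 p.2) P) (J : Finset ℕ) (κ : ℕ → ℕ)
    {g : ℝ → ℝ≥0∞} (hg : Measurable g) :
    ∫⁻ ω, ∏ j ∈ J, g (Wf j (κ j) ω) ∂P = (∫⁻ ω, g (W ω) ∂P) ^ J.card := by
  have hinj : Set.InjOn (fun j => (j, κ j)) J := fun _ _ _ _ h => (Prod.ext_iff.1 h).1
  calc ∫⁻ ω, ∏ j ∈ J, g (Wf j (κ j) ω) ∂P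
      = ∫⁻ ω, ∏ p ∈ J.image (fun j => (j, κ j)), g (Wf p.1 p.2 ω) ∂P := by
        simp_rw [Finset.prod_image hinj]
    _ = ∏ p ∈ J.image (fun j => (j, κ j)), ∫⁻ ω, g (Wf p.1 p.2 ω) ∂P :=
        lintegral_prod_eq_prod_lintegral_of_indepFun _ _ (hiid.comp (fun _ => g) fun _ => hg)
          fun p => hg.comp (hWfm p.1 p.2)
    _ = ∏ _j ∈ J, ∫⁻ ω, g (W ω) ∂P := by
        rw [Finset.prod_image hinj]
        refine Finset.prod_congr rfl fun j _ => ?_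
        rw [← lintegral_map hg (hWfm _ _), hid, lintegral_map hg hWm]
    _ = _ := Finset.prod_const _

lemma lintegral_ancestorWeight_rpow (hWm : Measurable W) (hWfm : ∀ j k, Measurable (Wf j k))
    (hid : ∀ j k, Measure.map (Wf j k) P = Measure.map W P)
    (hiid : iIndepFun (fun p : ℕ × ℕ => Wf p.1 p.2) P) (m k : ℕ) {s : ℝ} (hs : 0 ≤ s) :
    ∫⁻ ω, ancestorWeight m k (fun p => Wf p.1 p.2 ω) ^ s ∂P =
      (∫⁻ ω, ENNReal.ofReal (W ω) ^ s ∂P) ^ m := by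
  simp_rw [ancestorWeight, ← ENNReal.prod_rpow_of_nonneg hs]
  rw [lintegral_prod_weights hWm hWfm hid hiid _ _ (ENNReal.measurable_ofReal.pow_const s),
    Finset.card_range]

lemma lintegral_subcascadeMass (hWm : Measurable W) (hWfm : ∀ j k, Measurable (Wf j k))
    (hW0 : ∀ᵐ ω ∂P, 0 ≤ W ω) (hWint : Integrable W P) (hWmean : ∫ ω, W ω ∂P = 1)
    (hid : ∀ j k, Measure.map (Wf j k) P = Measure.map W P)
    (hiid : iIndepFun (fun p : ℕ × ℕ => Wf p.1 p.2) P) (m n k : ℕ) :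
    ∫⁻ ω, subcascadeMass m n k (fun p => Wf p.1 p.2 ω) ∂P = ENNReal.ofReal (2 ^ m)⁻¹ := by
  have hmean : ∫⁻ ω, ENNReal.ofReal (W ω) ∂P = 1 := by
    rw [← ofReal_integral_eq_lintegral_ofReal hWint hW0, hWmean, ENNReal.ofReal_one]
  have hmeas : Measurable fun q : Ω × ℝ =>
      ∏ j ∈ Finset.Ico m n, ENNReal.ofReal (Wf j (dyadIdx j q.2) q.1) :=
    Finset.measurable_prod _ fun j _ => ENNReal.measurable_ofReal.comp <|
      (measurable_eval_dyadIdx j).comp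
        (((measurable_pi_lambda (fun ω (p : ℕ × ℕ) => Wf p.1 p.2 ω) fun p =>
          hWfm p.1 p.2).comp measurable_fst).prodMk measurable_snd)
  have := hiid.isProbabilityMeasure
  simp only [subcascadeMass]
  rw [lintegral_lintegral_swap hmeas.aemeasurable]
  simp_rw [lintegral_prod_weights hWm hWfm hid hiid _ _ ENNReal.measurable_ofReal, hmean,
    one_pow, setLIntegral_one, Real.volume_Ioc]
  congr 1
  ring

lemma lintegral_cascadeMeasure_dyadic_rpow_le (hWm : Measurable W)
    (hWfm : ∀ j k, Measurable (Wf j k)) (hW0 : ∀ᵐ ω ∂P, 0 ≤ W ω) (hWint : Integrable W P)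
    (hWmean : ∫ ω, W ω ∂P = 1) (hid : ∀ j k, Measure.map (Wf j k) P = Measure.map W P)
    (hiid : iIndepFun (fun p : ℕ × ℕ => Wf p.1 p.2) P) {s : ℝ} (hs0 : 0 < s) (hs1 : s ≤ 1)
    {m n k : ℕ} (hmn : m ≤ n) (hk : k < 2 ^ m) :
    ∫⁻ ω, cascadeMeasure Wf n ω (Icc ((k : ℝ) / 2 ^ m) ((k + 1) / 2 ^ m)) ^ s ∂P ≤
      (∫⁻ ω, ENNReal.ofReal (W ω) ^ s ∂P) ^ m * ENNReal.ofReal (2 ^ m)⁻¹ ^ s := by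
  have := hiid.isProbabilityMeasure
  have hy : Measurable fun ω (p : ℕ × ℕ) => Wf p.1 p.2 ω :=
    measurable_pi_lambda _ fun p => hWfm p.1 p.2
  have hsplit : ∀ᵐ ω ∂P, cascadeMeasure Wf n ω (Icc ((k : ℝ) / 2 ^ m) ((k + 1) / 2 ^ m)) ^ s =
      ancestorWeight m k (fun p => Wf p.1 p.2 ω) ^ s *
        subcascadeMass m n k (fun p => Wf p.1 p.2 ω) ^ s :=
    (ae_nonneg_weights hWm hWfm hid hW0).mono fun ω hω => by
      rw [cascadeMeasure_dyadic_eq_mul hω hmn hk, ENNReal.mul_rpow_of_nonneg _ _ hs0.le]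
  have hindep : IndepFun (fun ω => ancestorWeight m k (fun p => Wf p.1 p.2 ω) ^ s)
      (fun ω => subcascadeMass m n k (fun p => Wf p.1 p.2 ω) ^ s) P :=
    hiid.indepFun_of_dependsOn (fun p => hWfm p.1 p.2)
      (disjoint_ancestorIndices_subcascadeIndices m n k)
      ((measurable_ancestorWeight m k).pow_const s) ((measurable_subcascadeMass m n k).pow_const s)
      (fun _ _ h => congrArg (· ^ s) (dependsOn_ancestorWeight m k h))
      (fun _ _ h => congrArg (· ^ s) (dependsOn_subcascadeMass n hk h))
  calc _ = ∫⁻ ω, ancestorWeight m k (fun p => Wf p.1 p.2 ω) ^ s *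
        subcascadeMass m n k (fun p => Wf p.1 p.2 ω) ^ s ∂P := lintegral_congr_ae hsplit
    _ = (∫⁻ ω, ancestorWeight m k (fun p => Wf p.1 p.2 ω) ^ s ∂P) *
        ∫⁻ ω, subcascadeMass m n k (fun p => Wf p.1 p.2 ω) ^ s ∂P :=
      lintegral_mul_eq_lintegral_mul_lintegral_of_indepFun''
        (((measurable_ancestorWeight m k).comp hy).pow_const s).aemeasurable
        (((measurable_subcascadeMass m n k).comp hy).pow_const s).aemeasurable hindep
    _ ≤ (∫⁻ ω, ENNReal.ofReal (W ω) ^ s ∂P) ^ m *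
        (∫⁻ ω, subcascadeMass m n k (fun p => Wf p.1 p.2 ω) ∂P) ^ s := by
      rw [lintegral_ancestorWeight_rpow hWm hWfm hid hiid m k hs0.le]
      gcongr
      exact lintegral_rpow_le_rpow_lintegral
        ((measurable_subcascadeMass m n k).comp hy).aemeasurable hs0 hs1
    _ = _ := by rw [lintegral_subcascadeMass hWm hWfm hW0 hWint hWmean hid hiid]

lemma lintegral_cascadeMeasure_Icc_rpow_le (hWm : Measurable W)
    (hWfm : ∀ j k, Measurable (Wf j k)) (hW0 : ∀ᵐ ω ∂P, 0 ≤ W ω) (hWint : Integrable W P)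
    (hWmean : ∫ ω, W ω ∂P = 1) (hid : ∀ j k, Measure.map (Wf j k) P = Measure.map W P)
    (hiid : iIndepFun (fun p : ℕ × ℕ => Wf p.1 p.2) P) {s : ℝ} (hs0 : 0 < s) (hs1 : s ≤ 1)
    {m n : ℕ} (hmn : m ≤ n) {c d : ℝ} (hcd : d - c ≤ 3 / 2 ^ m) :
    ∫⁻ ω, cascadeMeasure Wf n ω (Icc c d) ^ s ∂P ≤
      4 * ((∫⁻ ω, ENNReal.ofReal (W ω) ^ s ∂P) ^ m * ENNReal.ofReal (2 ^ m)⁻¹ ^ s) := by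
  set K := (Finset.Icc (dyadIdx m c) (dyadIdx m c + 3)).filter (· < 2 ^ m)
  have hK : K.card ≤ 4 := (Finset.card_filter_le _ _).trans (by simp; omega)
  have hcover (ω : Ω) : cascadeMeasure Wf n ω (Icc c d) ^ s ≤
      ∑ k ∈ K, cascadeMeasure Wf n ω (Icc ((k : ℝ) / 2 ^ m) ((k + 1) / 2 ^ m)) ^ s :=
    calc cascadeMeasure Wf n ω (Icc c d) ^ s
        = cascadeMeasure Wf n ω (Icc c d ∩ Icc 0 1) ^ s := by
          rw [measure_inter_conull (cascadeMeasure_compl_Icc n ω)]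
      _ ≤ (∑ k ∈ K, cascadeMeasure Wf n ω (Icc ((k : ℝ) / 2 ^ m) ((k + 1) / 2 ^ m))) ^ s := by
          gcongr
          exact (measure_mono (Icc_inter_subset_biUnion_dyadic (by exact_mod_cast hcd))).trans
            (measure_biUnion_finset_le _ _)
      _ ≤ _ := ENNReal.rpow_sum_le_sum_rpow _ _ hs0 hs1
  calc _ ≤ ∫⁻ ω, ∑ k ∈ K,
        cascadeMeasure Wf n ω (Icc ((k : ℝ) / 2 ^ m) ((k + 1) / 2 ^ m)) ^ s ∂P :=
      lintegral_mono hcover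
    _ = ∑ k ∈ K, ∫⁻ ω,
        cascadeMeasure Wf n ω (Icc ((k : ℝ) / 2 ^ m) ((k + 1) / 2 ^ m)) ^ s ∂P :=
      lintegral_finsetSum _ fun _ _ =>
        (measurable_cascadeMeasure_apply hWfm n measurableSet_Icc).pow_const s
    _ ≤ ∑ _k ∈ K, (∫⁻ ω, ENNReal.ofReal (W ω) ^ s ∂P) ^ m * ENNReal.ofReal (2 ^ m)⁻¹ ^ s :=
      Finset.sum_le_sum fun _ hk => lintegral_cascadeMeasure_dyadic_rpow_le hWm hWfm hW0 hWint
        hWmean hid hiid hs0 hs1 hmn (Finset.mem_filter.1 hk).2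
    _ ≤ _ := by
      rw [Finset.sum_const, nsmul_eq_mul]
      gcongr
      exact_mod_cast hK

/-- Weak convergence only bounds `μ (Icc a b)` by the `μ_n`-mass of a neighbourhood, so the
finite-level bound is applied to `Icc a b` enlarged by `2⁻⁽ᵐ⁺¹⁾` on each side; Fatou's lemma then
passes it to the limit. -/
lemma lintegral_weakLimit_Icc_rpow_le (hWm : Measurable W)
    (hWfm : ∀ j k, Measurable (Wf j k)) (hW0 : ∀ᵐ ω ∂P, 0 ≤ W ω) (hWint : Integrable W P)
    (hWmean : ∫ ω, W ω ∂P = 1) (hid : ∀ j k, Measure.map (Wf j k) P = Measure.map W P)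
    (hiid : iIndepFun (fun p : ℕ × ℕ => Wf p.1 p.2) P) {s : ℝ} (hs0 : 0 < s) (hs1 : s ≤ 1)
    (μlim : Ω → Measure ℝ) [∀ ω, IsFiniteMeasure (μlim ω)]
    (hweak : ∀ᵐ ω ∂P, IsWeakLimit (fun n => cascadeMeasure Wf n ω) (μlim ω))
    {a b : ℝ} {m : ℕ} (hab : b - a ≤ 2 / 2 ^ m) :
    ∫⁻ ω, μlim ω (Icc a b) ^ s ∂P ≤
      4 * ((∫⁻ ω, ENNReal.ofReal (W ω) ^ s ∂P) ^ m * ENNReal.ofReal (2 ^ m)⁻¹ ^ s) := by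
  set ε : ℝ := (2 ^ (m + 1))⁻¹
  have hε : 0 < ε := by positivity
  have hlen : (b + ε) - (a - ε) ≤ 3 / 2 ^ m := by
    have : 2 * ε = 1 / 2 ^ m := by simp [ε, pow_succ]
    linarith [show (3 : ℝ) / 2 ^ m = 2 / 2 ^ m + 1 / 2 ^ m by ring]
  have hpt : ∀ᵐ ω ∂P, μlim ω (Icc a b) ^ s ≤
      liminf (fun n => cascadeMeasure Wf n ω (Icc (a - ε) (b + ε)) ^ s) atTop :=
    hweak.mono fun ω hω => calc
      μlim ω (Icc a b) ^ s
          ≤ liminf (fun n => cascadeMeasure Wf n ω (Icc (a - ε) (b + ε))) atTop ^ s := by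
        gcongr
        exact (hω.measure_le_liminf isClosed_Icc isOpen_Ioo
          (Icc_subset_Ioo (by linarith) (by linarith))).trans
          (liminf_le_liminf (.of_forall fun n => measure_mono Ioo_subset_Icc_self))
      _ = _ := (ENNReal.monotone_rpow_of_nonneg hs0.le).map_liminf_of_continuousAt _
          ENNReal.continuous_rpow_const.continuousAt
  calc _ ≤ ∫⁻ ω, liminf (fun n => cascadeMeasure Wf n ω (Icc (a - ε) (b + ε)) ^ s) atTop ∂P :=
      lintegral_mono_ae hpt
    _ ≤ liminf (fun n => ∫⁻ ω, cascadeMeasure Wf n ω (Icc (a - ε) (b + ε)) ^ s ∂P) atTop :=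
      lintegral_liminf_le' fun n =>
        ((measurable_cascadeMeasure_apply hWfm n measurableSet_Icc).pow_const s).aemeasurable
    _ ≤ _ := liminf_le_of_frequently_le' <| Eventually.frequently <| eventually_atTop.2
      ⟨m, fun _ hn => lintegral_cascadeMeasure_Icc_rpow_le hWm hWfm hW0 hWint hWmean hid hiid
        hs0 hs1 hn hlen⟩

end Moments

lemma pow_mul_inv_two_pow_rpow {A : ℝ} (hA : 0 < A) (s : ℝ) (m : ℕ) :
    A ^ m * ((2 ^ m)⁻¹ : ℝ) ^ s = ((2 ^ m)⁻¹ : ℝ) ^ (s - Real.logb 2 A) := by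
  have h2m : (0 : ℝ) < 2 ^ m := by positivity
  have hlog : ((2 : ℝ) ^ m) ^ Real.logb 2 A = A ^ m := by
    rw [← Real.rpow_natCast, ← Real.rpow_mul zero_le_two, mul_comm, Real.rpow_mul zero_le_two,
      Real.rpow_logb two_pos (by norm_num) hA, Real.rpow_natCast]
  rw [Real.rpow_sub (inv_pos.2 h2m), Real.inv_rpow h2m.le (Real.logb 2 A), hlog]
  field_simp

lemma le_ofReal_mul_rpow_of_forall_dyadic {L : ℝ≥0∞} {d φ : ℝ} (hd0 : 0 ≤ d) (hd1 : d ≤ 1)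
    (hφ : 0 < φ) (h : ∀ m : ℕ, d ≤ 2 / 2 ^ m → L ≤ ENNReal.ofReal (4 * ((2 ^ m)⁻¹ : ℝ) ^ φ)) :
    L ≤ ENNReal.ofReal (4 * d ^ φ) := by
  rcases hd0.eq_or_lt with rfl | hd
  · have hlim : Tendsto (fun m : ℕ => ENNReal.ofReal (4 * ((2 ^ m)⁻¹ : ℝ) ^ φ)) atTop
        (𝓝 (ENNReal.ofReal (4 * 0 ^ φ))) :=
      ENNReal.tendsto_ofReal <| ((tendsto_inv_atTop_zero.comp
        (tendsto_pow_atTop_atTop_of_one_lt one_lt_two)).rpow_const (Or.inr hφ.le)).const_mul 4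
    exact ge_of_tendsto' hlim fun m => h m (by positivity)
  · obtain ⟨n, hlt, hle⟩ :=
      exists_nat_pow_near_of_lt_one hd hd1 (by norm_num : (0 : ℝ) < 2⁻¹) (by norm_num)
    rw [inv_pow] at hlt hle
    refine (h (n + 1) ?_).trans (ENNReal.ofReal_le_ofReal ?_)
    · rwa [pow_succ, mul_comm, ← div_div, div_self two_ne_zero, one_div]
    · gcongr

theorem cascade_metric_moment_bound_general
    {Ω : Type*} [MeasurableSpace Ω] (P : Measure Ω) [IsProbabilityMeasure P]
    (W : Ω → ℝ) (Wf : ℕ → ℕ → Ω → ℝ)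
    (hWm : Measurable W) (hWfm : ∀ n k, Measurable (Wf n k))
    (hWpos : ∀ᵐ ω ∂P, 0 < W ω)
    (hWint : Integrable W P) (hWmean : ∫ ω, W ω ∂P = 1)
    (hid : ∀ n k, Measure.map (Wf n k) P = Measure.map W P)
    (hiid : iIndepFun (fun p : ℕ × ℕ => Wf p.1 p.2) P)
    (μlim : Ω → Measure ℝ) [∀ ω, IsFiniteMeasure (μlim ω)]
    (hweak : ∀ᵐ ω ∂P, IsWeakLimit (fun n => cascadeMeasure Wf n ω) (μlim ω))
    (x y : ℝ) (hx : x ∈ Set.Icc (0:ℝ) 1) (hy : y ∈ Set.Icc (0:ℝ) 1)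
    (s : ℝ) (hs : s ∈ Set.Ioc (0:ℝ) 1) :
    ∫⁻ ω, (μlim ω (Set.Icc (min x y) (max x y))) ^ s ∂P
      ≤ ENNReal.ofReal (8 * |x - y| ^ (s - Real.logb 2 (∫ ω, W ω ^ s ∂P))) := by
  obtain ⟨hs0, hs1⟩ := hs
  have hW0 : ∀ᵐ ω ∂P, 0 ≤ W ω := hWpos.mono fun _ h => h.le
  have hΛ1 := lintegral_ofReal_rpow_le_one hW0 hWint hWmean hs0 hs1
  have hΛ := ofReal_integral_rpow_eq_lintegral hW0 hWm.aemeasurable hs0.le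
    (hΛ1.trans_lt ENNReal.one_lt_top).ne
  have hA0 : 0 < ∫ ω, W ω ^ s ∂P :=
    ENNReal.ofReal_pos.1 (hΛ ▸ lintegral_ofReal_rpow_pos hWm hWpos s)
  have hφ : 0 < s - Real.logb 2 (∫ ω, W ω ^ s ∂P) := by
    linarith [Real.logb_nonpos one_lt_two hA0.le (ENNReal.ofReal_le_one.1 (hΛ ▸ hΛ1))]
  have hd1 : |x - y| ≤ 1 := abs_sub_le_iff.2 ⟨by linarith [hx.2, hy.1], by linarith [hx.1, hy.2]⟩
  refine (le_ofReal_mul_rpow_of_forall_dyadic (abs_nonneg _) hd1 hφ fun m hm => ?_).trans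
    (ENNReal.ofReal_le_ofReal (by gcongr; norm_num))
  calc _ ≤ 4 * ((∫⁻ ω, ENNReal.ofReal (W ω) ^ s ∂P) ^ m * ENNReal.ofReal (2 ^ m)⁻¹ ^ s) :=
        lintegral_weakLimit_Icc_rpow_le hWm hWfm hW0 hWint hWmean hid hiid hs0 hs1 μlim hweak
          (by rwa [max_sub_min_eq_abs'])
    _ = _ := by
      rw [← hΛ, ← ENNReal.ofReal_pow hA0.le, ENNReal.ofReal_rpow_of_nonneg (by positivity) hs0.le,
        ← ENNReal.ofReal_mul (by positivity), pow_mul_inv_two_pow_rpow hA0,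
        ENNReal.ofReal_mul zero_le_four, ENNReal.ofReal_ofNat]

/-- **Lemma 3.3.** For all `x, y ∈ [0,1]` and `s ∈ (0,1]`,
`E[ρ(x,y)^s] ≤ 8 |x-y|^{φ(s)}`, where `φ(s) = s - log₂ E[W^s]` and `ρ(x,y) = μ([x∧y, x∨y])`. -/
theorem cascade_metric_moment_bound
    {Ω : Type*} [MeasurableSpace Ω] (P : Measure Ω) [IsProbabilityMeasure P]
    (W : Ω → ℝ) (Wf : ℕ → ℕ → Ω → ℝ)
    (hWm : Measurable W) (hWfm : ∀ n k, Measurable (Wf n k))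
    (hWpos : ∀ᵐ ω ∂P, 0 < W ω)
    (hWint : Integrable W P) (hWmean : ∫ ω, W ω ∂P = 1)
    (hid : ∀ n k, Measure.map (Wf n k) P = Measure.map W P)
    (hiid : iIndepFun (fun p : ℕ × ℕ => Wf p.1 p.2) P)
    (hlogint : Integrable (fun ω => W ω * Real.logb 2 (W ω)) P)
    (hlog : ∫ ω, W ω * Real.logb 2 (W ω) ∂P < 1)
    (μlim : Ω → Measure ℝ) [∀ ω, IsFiniteMeasure (μlim ω)]
    (hweak : ∀ᵐ ω ∂P, IsWeakLimit (fun n => cascadeMeasure Wf n ω) (μlim ω))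
    (x y : ℝ) (hx : x ∈ Set.Icc (0:ℝ) 1) (hy : y ∈ Set.Icc (0:ℝ) 1)
    (s : ℝ) (hs : s ∈ Set.Ioc (0:ℝ) 1) :
    ∫⁻ ω, (μlim ω (Set.Icc (min x y) (max x y))) ^ s ∂P
      ≤ ENNReal.ofReal (8 * |x - y| ^ (s - Real.logb 2 (∫ ω, W ω ^ s ∂P))) :=
  cascade_metric_moment_bound_general P W Wf hWm hWfm hWpos hWint hWmean hid hiid μlim hweak x y hx
    hy s hs
end
end

section
/- Let Z₁ and Z₂ be independent, identically distributed, nonnegative, integrable random variables such that E[max(Z₁, Z₂)] = E[Z₁] + E[Z₂]. Then Z₁ = 0 almost surely. -/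
open MeasureTheory ProbabilityTheory Filter Set
open scoped ENNReal NNReal Topology

/-! Since `min + max = Z₁ + Z₂`, the hypothesis forces `E[min(Z₁, Z₂)] = 0`, so almost surely one
of `Z₁, Z₂` vanishes. By independence and equality of laws,
`P(Z₁ > 0)² = P(Z₁ > 0, Z₂ > 0) = 0`. -/

section MinMax

variable {α : Type*} [MeasurableSpace α] {μ : Measure α} {f g : α → ℝ}

theorem integral_min_add_integral_max (hf : Integrable f μ) (hg : Integrable g μ) :
    ∫ x, min (f x) (g x) ∂μ + ∫ x, max (f x) (g x) ∂μ = ∫ x, f x ∂μ + ∫ x, g x ∂μ := by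
  have hmin : Integrable (fun x => min (f x) (g x)) μ := hf.inf hg
  have hmax : Integrable (fun x => max (f x) (g x)) μ := hf.sup hg
  rw [← integral_add hmin hmax, ← integral_add hf hg]
  simp only [min_add_max]

theorem min_ae_eq_zero_of_integral_max_eq_add (hf₀ : 0 ≤ᵐ[μ] f) (hg₀ : 0 ≤ᵐ[μ] g)
    (hf : Integrable f μ) (hg : Integrable g μ)
    (hmax : ∫ x, max (f x) (g x) ∂μ = ∫ x, f x ∂μ + ∫ x, g x ∂μ) :
    (fun x => min (f x) (g x)) =ᵐ[μ] 0 := by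
  have hmin_nonneg : 0 ≤ᵐ[μ] fun x => min (f x) (g x) := by
    filter_upwards [hf₀, hg₀] with x hfx hgx using le_min hfx hgx
  have hmin_integral : ∫ x, min (f x) (g x) ∂μ = 0 := by
    linarith [integral_min_add_integral_max hf hg]
  exact (integral_eq_zero_iff_of_nonneg_ae hmin_nonneg (hf.inf hg)).mp hmin_integral

end MinMax

theorem ProbabilityTheory.IndepFun.measure_preimage_eq_zero_of_measure_inter_preimage_eq_zero
    {Ω β : Type*} [MeasurableSpace Ω] [MeasurableSpace β] {μ : Measure Ω} {X Y : Ω → β}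
    (hindep : IndepFun X Y μ) (hident : IdentDistrib X Y μ μ) {s : Set β}
    (hs : MeasurableSet s) (hinter : μ (X ⁻¹' s ∩ Y ⁻¹' s) = 0) :
    μ (X ⁻¹' s) = 0 := by
  rwa [hindep.measure_inter_preimage_eq_mul s s hs hs, ← hident.measure_mem_eq hs,
    mul_self_eq_zero] at hinter

theorem iid_max_expectation_eq_sum_imp_zero_general
    {Ω : Type*} [MeasurableSpace Ω] (P : Measure Ω)
    (Z₁ Z₂ : Ω → ℝ)
    (hpos1 : ∀ᵐ ω ∂P, 0 ≤ Z₁ ω) (hpos2 : ∀ᵐ ω ∂P, 0 ≤ Z₂ ω)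
    (hint1 : Integrable Z₁ P) (hint2 : Integrable Z₂ P)
    (hindep : IndepFun Z₁ Z₂ P)
    (hide : Measure.map Z₁ P = Measure.map Z₂ P)
    (hmax : ∫ ω, max (Z₁ ω) (Z₂ ω) ∂P = (∫ ω, Z₁ ω ∂P) + ∫ ω, Z₂ ω ∂P) :
    ∀ᵐ ω ∂P, Z₁ ω = 0 := by
  have hident : IdentDistrib Z₁ Z₂ P P := ⟨hint1.aemeasurable, hint2.aemeasurable, hide⟩
  have hmin := min_ae_eq_zero_of_integral_max_eq_add hpos1 hpos2 hint1 hint2 hmax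
  have hboth_pos : P (Z₁ ⁻¹' Ioi 0 ∩ Z₂ ⁻¹' Ioi 0) = 0 := by
    rw [measure_eq_zero_iff_ae_notMem]
    filter_upwards [hmin] with ω hω ⟨hZ₁, hZ₂⟩
    exact (lt_min hZ₁ hZ₂).ne' hω
  have hZ₁_pos := hindep.measure_preimage_eq_zero_of_measure_inter_preimage_eq_zero hident
    measurableSet_Ioi hboth_pos
  rw [measure_eq_zero_iff_ae_notMem] at hZ₁_pos
  filter_upwards [hpos1, hZ₁_pos] with ω hω hnot_pos
  exact le_antisymm (not_lt.mp hnot_pos) hω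

/-- **key step of Lemma A.2.** If `Z₁` and `Z₂` are independent, identically
distributed, nonnegative, integrable random variables with
`E[max(Z₁,Z₂)] = E[Z₁] + E[Z₂]`, then `Z₁ = 0` almost surely. -/
theorem iid_max_expectation_eq_sum_imp_zero
    {Ω : Type*} [MeasurableSpace Ω] (P : Measure Ω) [IsProbabilityMeasure P]
    (Z₁ Z₂ : Ω → ℝ) (h1 : Measurable Z₁) (h2 : Measurable Z₂)
    (hpos1 : ∀ᵐ ω ∂P, 0 ≤ Z₁ ω) (hpos2 : ∀ᵐ ω ∂P, 0 ≤ Z₂ ω)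
    (hint1 : Integrable Z₁ P) (hint2 : Integrable Z₂ P)
    (hindep : IndepFun Z₁ Z₂ P)
    (hide : Measure.map Z₁ P = Measure.map Z₂ P)
    (hmax : ∫ ω, max (Z₁ ω) (Z₂ ω) ∂P = (∫ ω, Z₁ ω ∂P) + ∫ ω, Z₂ ω ∂P) :
    ∀ᵐ ω ∂P, Z₁ ω = 0 :=
  iid_max_expectation_eq_sum_imp_zero_general P Z₁ Z₂ hpos1 hpos2 hint1 hint2 hindep hide hmax
end
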